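/- Let d₁, d₂ ≥ 1, let D = {D_i}_{i=1}^{d₁²} be a measure basis for d₁×d₁ complex matrices and E = {E_j}_{j=1}^{d₂²} a measure basis for d₂×d₂ complex matrices, both with all weights strictly positive. Then the elementwise Kronecker products {D_i ⊗ E_j} form a measure basis for (d₁d₂)×(d₁d₂) complex matrices with weights (tr D_i)(tr E_j), its Gram matrix is the Kronecker product of the Gram matrices of D and E (hence its Born matrix is the Kronecker product of their Born matrices), and its principal Wigner basis is the elementwise Kronecker product of the principal Wigner bases: PW(D⊗E)_{(i,j)} = PW(D)_i ⊗ PW(E)_j. In particular, if D and E are MICs then so is D⊗E. -/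

import Mathlib

open Matrix BigOperators
open scoped ComplexOrder Kronecker

/-- A measure basis: a linearly independent family of `d²` Hermitian `d×d` complex
matrices summing to the identity, with nonnegative traces. -/
def IsMeasureBasis {d : ℕ} (L : Fin (d ^ 2) → Matrix (Fin d) (Fin d) ℂ) : Prop :=
  (∀ i, (L i).IsHermitian) ∧ LinearIndependent ℝ L ∧ (∑ i, L i) = 1 ∧ ∀ i, 0 ≤ ((L i).trace).re

/-- A Wigner basis: an orthogonal measure basis. -/
def IsWignerBasis {d : ℕ} (L : Fin (d ^ 2) → Matrix (Fin d) (Fin d) ℂ) : Prop :=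
  IsMeasureBasis L ∧ ∀ i j, i ≠ j → (L i * L j).trace = 0

/-- The rescaled frame operator `S_L(X) = ∑ⱼ (tr(X Lⱼ)/lⱼ) Lⱼ`. -/
noncomputable def rsFrameOp {n : Type*} [Fintype n] {m : Type*} [Fintype m] [DecidableEq m]
    (L : n → Matrix m m ℂ) (X : Matrix m m ℂ) : Matrix m m ℂ :=
  ∑ j, (((X * L j).trace) / ((L j).trace)) • L j

/-- A map on matrices that is ℝ-linear, Hermiticity-preserving, self-adjoint with respect to
the Hilbert–Schmidt inner product on Hermitian matrices, and positive. -/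
def IsPosSelfAdjMap {m : Type*} [Fintype m]
    (T : Matrix m m ℂ → Matrix m m ℂ) : Prop :=
  IsLinearMap ℝ T ∧ (∀ X, X.IsHermitian → (T X).IsHermitian) ∧
  (∀ X Y, X.IsHermitian → Y.IsHermitian → (T X * Y).trace = (X * T Y).trace) ∧
  (∀ X, X.IsHermitian → 0 ≤ ((X * T X).trace).re)

/-- `T` is the (unique) positive self-adjoint inverse square root of the rescaled frame
operator of `L`, i.e. `S_L ∘ T ∘ T = id` on Hermitian matrices; `PW(L) i = T (L i)`. -/
def IsInvSqrtOfFrameOp {n : Type*} [Fintype n] {m : Type*} [Fintype m] [DecidableEq m]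
    (L : n → Matrix m m ℂ) (T : Matrix m m ℂ → Matrix m m ℂ) : Prop :=
  IsPosSelfAdjMap T ∧ ∀ X : Matrix m m ℂ, X.IsHermitian → rsFrameOp L (T (T X)) = X

/-!
Kronecker products of Hermitian matrices multiply Hilbert–Schmidt inner products,
`re tr ((X ⊗ Y)(X' ⊗ Y')) = re tr (X X') · re tr (Y Y')`. Hence the Gram and bias matrices of
`D ⊗ E` are Kronecker products, which gives the Born matrix and, since a Kronecker product of
positive definite Gram matrices is positive definite, linear independence.

The rescaled frame operator factors as well, `S_{D⊗E} (X ⊗ Y) = S_D X ⊗ S_E Y`. So the map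
`g : X ⊗ Y ↦ T₁ X ⊗ T₂ Y` on the real inner product space of Hermitian matrices squares to
`S_{D⊗E}⁻¹`, and it is positive because its matrix `⟪M_p, g M_q⟫` is the Kronecker product of the
positive semidefinite matrices `⟪D_i, T₁ D_k⟫` and `⟪E_j, T₂ E_l⟫`. Positive square roots being
unique, it is the principal Wigner map of `D ⊗ E`.
-/

open scoped InnerProductSpace MatrixOrder

namespace Matrix

variable {l m n p : Type*}

lemma sum_kronecker_sum {α ι κ : Type*} [CommSemiring α] [Fintype ι] [Fintype κ]
    (A : ι → Matrix l m α) (B : κ → Matrix n p α) :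
    (∑ i, A i) ⊗ₖ (∑ j, B j) = ∑ q : ι × κ, A q.1 ⊗ₖ B q.2 := by
  ext
  simp [sum_apply, Finset.sum_mul_sum, Fintype.sum_prod_type]

variable {X X' : Matrix m m ℂ}

lemma IsHermitian.kronecker {Y : Matrix n n ℂ} (hX : X.IsHermitian) (hY : Y.IsHermitian) :
    (X ⊗ₖ Y).IsHermitian := by
  rw [IsHermitian, conjTranspose_kronecker, hX.eq, hY.eq]

variable [Fintype m] [Fintype n]

lemma IsHermitian.im_trace (hX : X.IsHermitian) : X.trace.im = 0 := by
  rw [← Complex.conj_eq_iff_im, ← Complex.star_def, ← trace_conjTranspose, hX.eq]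

lemma IsHermitian.im_trace_mul (hX : X.IsHermitian) (hX' : X'.IsHermitian) :
    (X * X').trace.im = 0 := by
  rw [← Complex.conj_eq_iff_im, ← Complex.star_def, ← trace_conjTranspose, conjTranspose_mul,
    hX.eq, hX'.eq, trace_mul_comm]

lemma IsHermitian.re_trace_kronecker (hX : X.IsHermitian) (Y : Matrix n n ℂ) :
    (X ⊗ₖ Y).trace.re = X.trace.re * Y.trace.re := by
  simp [trace_kronecker, Complex.mul_re, hX.im_trace]

lemma IsHermitian.re_trace_kronecker_mul_kronecker (hX : X.IsHermitian) (hX' : X'.IsHermitian)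
    (Y Y' : Matrix n n ℂ) :
    ((X ⊗ₖ Y) * (X' ⊗ₖ Y')).trace.re = (X * X').trace.re * (Y * Y').trace.re := by
  simp [← mul_kronecker_mul, trace_kronecker, Complex.mul_re, hX.im_trace_mul hX']

end Matrix

noncomputable abbrev HermMat (n : Type*) [Fintype n] : Submodule ℝ (Matrix n n ℂ) :=
  selfAdjoint.submodule ℝ (Matrix n n ℂ)

namespace HermMat

variable {m n : Type*} [Fintype m] [Fintype n]

lemma re_trace_mul_self_nonneg (X : HermMat n) : 0 ≤ ((X : Matrix n n ℂ) * X).trace.re := by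
  have hX : (X : Matrix n n ℂ)ᴴ = X := X.2
  have := (posSemidef_conjTranspose_mul_self (X : Matrix n n ℂ)).trace_nonneg
  rw [hX] at this
  exact (Complex.nonneg_iff.mp this).1

noncomputable instance : InnerProductSpace.Core ℝ (HermMat n) where
  inner X Y := ((X : Matrix n n ℂ) * Y).trace.re
  conj_inner_symm X Y := by
    simp only [starRingEnd_apply, star_trivial]
    rw [trace_mul_comm]
  re_inner_nonneg := re_trace_mul_self_nonneg
  add_left X Y Z := by simp [add_mul]
  smul_left X Y r := by simp
  definite X h := by
    have hX : (X : Matrix n n ℂ).IsHermitian := X.2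
    have htr : ((X : Matrix n n ℂ)ᴴ * X).trace = 0 := by
      rw [hX.eq]
      exact Complex.ext h (hX.im_trace_mul hX)
    exact Subtype.ext (trace_conjTranspose_mul_self_eq_zero_iff.mp htr)

noncomputable instance : NormedAddCommGroup (HermMat n) :=
  InnerProductSpace.Core.toNormedAddCommGroup (𝕜 := ℝ)

noncomputable instance : InnerProductSpace ℝ (HermMat n) :=
  InnerProductSpace.ofCore _

lemma inner_def (X Y : HermMat n) : ⟪X, Y⟫_ℝ = ((X : Matrix n n ℂ) * Y).trace.re := rfl

lemma isHermitian (X : HermMat n) : (X : Matrix n n ℂ).IsHermitian := X.2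

noncomputable def kron : HermMat m →ₗ[ℝ] HermMat n →ₗ[ℝ] HermMat (m × n) :=
  LinearMap.mk₂ ℝ (fun X Y => ⟨X.1 ⊗ₖ Y.1, (isHermitian X).kronecker (isHermitian Y)⟩)
    (fun _ _ _ => Subtype.ext (add_kronecker _ _ _))
    (fun _ _ _ => Subtype.ext (smul_kronecker _ _ _))
    (fun _ _ _ => Subtype.ext (kronecker_add _ _ _))
    (fun _ _ _ => Subtype.ext (kronecker_smul _ _ _))

@[simp]
lemma coe_kron (X : HermMat m) (Y : HermMat n) :
    (kron X Y : Matrix (m × n) (m × n) ℂ) = (X : Matrix m m ℂ) ⊗ₖ (Y : Matrix n n ℂ) := rfl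

lemma inner_kron (X X' : HermMat m) (Y Y' : HermMat n) :
    ⟪kron X Y, kron X' Y'⟫_ℝ = ⟪X, X'⟫_ℝ * ⟪Y, Y'⟫_ℝ := by
  simp only [inner_def, coe_kron, (isHermitian X).re_trace_kronecker_mul_kronecker (isHermitian X')]

end HermMat

namespace LinearMap

variable {E : Type*} [NormedAddCommGroup E]

theorem IsPositive.eq_of_mul_self_eq {𝕜 : Type*} [RCLike 𝕜] [InnerProductSpace 𝕜 E]
    [FiniteDimensional 𝕜 E] {f g : E →ₗ[𝕜] E} (hf : f.IsPositive) (hg : g.IsPositive)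
    (h : f * f = g * g) : f = g := by
  let b := stdOrthonormalBasis 𝕜 E
  have hf' := ((posSemidef_toMatrix_iff b).2 hf).nonneg
  have hg' := ((posSemidef_toMatrix_iff b).2 hg).nonneg
  apply (toMatrix b.toBasis b.toBasis).injective
  rw [← CFC.mul_self_eq_mul_self_iff _ _ hf' hg', ← toMatrix_mul, ← toMatrix_mul, h]

variable [InnerProductSpace ℝ E] {ι : Type*} [Fintype ι]

lemma inner_apply_eq_dotProduct (b : Module.Basis ι ℝ E) (f : E →ₗ[ℝ] E) (x y : E) :
    ⟪x, f y⟫_ℝ = b.repr x ⬝ᵥ (Matrix.of fun i j => ⟪b i, f (b j)⟫_ℝ) *ᵥ b.repr y := by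
  conv_lhs => rw [← b.sum_repr x, ← b.sum_repr y]
  simp only [map_sum, map_smul, sum_inner, inner_sum, real_inner_smul_left,
    real_inner_smul_right, dotProduct, Matrix.mulVec, Matrix.of_apply, Finset.mul_sum]
  rw [Finset.sum_comm]
  refine Finset.sum_congr rfl fun i _ => Finset.sum_congr rfl fun j _ => ?_
  ring

theorem isPositive_iff_posSemidef_inner_basis (b : Module.Basis ι ℝ E) (f : E →ₗ[ℝ] E) :
    f.IsPositive ↔ (Matrix.of fun i j => ⟪b i, f (b j)⟫_ℝ).PosSemidef := by
  rw [Matrix.posSemidef_iff_dotProduct_mulVec, isPositive_iff]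
  simp only [star_trivial]
  constructor
  · rintro ⟨hsymm, hnonneg⟩
    refine ⟨Matrix.ext fun i j => ?_, fun v => ?_⟩
    · simp only [Matrix.conjTranspose_apply, Matrix.of_apply, star_trivial]
      rw [← hsymm, real_inner_comm]
    · have := hnonneg (b.equivFun.symm v)
      rwa [real_inner_comm, inner_apply_eq_dotProduct b, Module.Basis.equivFun_symm_apply,
        b.repr_sum_self] at this
  · rintro ⟨hK, hnonneg⟩
    refine ⟨fun x y => ?_, fun x => ?_⟩
    · rw [real_inner_comm, inner_apply_eq_dotProduct b, inner_apply_eq_dotProduct b,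
        Matrix.dotProduct_mulVec, ← Matrix.mulVec_transpose, dotProduct_comm,
        ← Matrix.conjTranspose_eq_transpose_of_trivial, hK.eq]
    · rw [real_inner_comm, inner_apply_eq_dotProduct b]
      exact hnonneg _

end LinearMap

noncomputable def IsLinearMap.restrictHerm {m : Type*} [Fintype m]
    {T : Matrix m m ℂ → Matrix m m ℂ} (hT : IsLinearMap ℝ T)
    (hH : ∀ X, X.IsHermitian → (T X).IsHermitian) : HermMat m →ₗ[ℝ] HermMat m :=
  (IsLinearMap.mk' T hT).restrict hH

@[simp]
lemma IsLinearMap.coe_restrictHerm {m : Type*} [Fintype m] {T : Matrix m m ℂ → Matrix m m ℂ}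
    (hT : IsLinearMap ℝ T) (hH : ∀ X, X.IsHermitian → (T X).IsHermitian) (X : HermMat m) :
    (hT.restrictHerm hH X : Matrix m m ℂ) = T X := rfl

namespace IsPosSelfAdjMap

variable {m : Type*} [Fintype m] {T : Matrix m m ℂ → Matrix m m ℂ}

noncomputable def toHerm (hT : IsPosSelfAdjMap T) : HermMat m →ₗ[ℝ] HermMat m :=
  hT.1.restrictHerm hT.2.1

lemma isPositive_toHerm (hT : IsPosSelfAdjMap T) : hT.toHerm.IsPositive := by
  refine (LinearMap.isPositive_iff _).2 ⟨fun X Y => ?_, fun X => ?_⟩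
  · simp only [toHerm, HermMat.inner_def, IsLinearMap.coe_restrictHerm]
    rw [hT.2.2.1 X Y X.2 Y.2]
  · simp only [toHerm, HermMat.inner_def, IsLinearMap.coe_restrictHerm]
    rw [trace_mul_comm]
    exact hT.2.2.2 X X.2

end IsPosSelfAdjMap

section FrameOperator

variable {ι m : Type*} [Fintype ι] [Fintype m] [DecidableEq m] {L : ι → Matrix m m ℂ}

lemma isLinearMap_rsFrameOp (L : ι → Matrix m m ℂ) : IsLinearMap ℝ (rsFrameOp L) where
  map_add X Y := by
    simp only [rsFrameOp, add_mul, trace_add, add_div, add_smul, Finset.sum_add_distrib]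
  map_smul r X := by
    simp only [rsFrameOp, smul_mul, trace_smul, smul_div_assoc, smul_assoc, Finset.smul_sum]

lemma rsFrameOp_eq_sum_real_smul (hL : ∀ i, (L i).IsHermitian) {X : Matrix m m ℂ}
    (hX : X.IsHermitian) :
    rsFrameOp L X = ∑ j, ((X * L j).trace.re / (L j).trace.re) • L j := by
  refine Finset.sum_congr rfl fun j _ => ?_
  rw [← Complex.coe_smul, Complex.ofReal_div]
  congr 2
  · apply Complex.ext <;> simp [hX.im_trace_mul (hL j)]
  · apply Complex.ext <;> simp [(hL j).im_trace]

lemma rsFrameOp_isHermitian (hL : ∀ i, (L i).IsHermitian) {X : Matrix m m ℂ}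
    (hX : X.IsHermitian) : (rsFrameOp L X).IsHermitian := by
  rw [rsFrameOp_eq_sum_real_smul hL hX]
  exact Submodule.sum_mem (HermMat m) fun j _ => Submodule.smul_mem _ _ (hL j)

noncomputable def rsFrameOpHerm (hL : ∀ i, (L i).IsHermitian) : HermMat m →ₗ[ℝ] HermMat m :=
  (isLinearMap_rsFrameOp L).restrictHerm fun _ => rsFrameOp_isHermitian hL

lemma rsFrameOp_kronecker {κ n : Type*} [Fintype κ] [Fintype n] [DecidableEq n]
    (D : ι → Matrix m m ℂ) (E : κ → Matrix n n ℂ) (X : Matrix m m ℂ) (Y : Matrix n n ℂ) :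
    rsFrameOp (fun q : ι × κ => D q.1 ⊗ₖ E q.2) (X ⊗ₖ Y) = rsFrameOp D X ⊗ₖ rsFrameOp E Y := by
  simp only [rsFrameOp, sum_kronecker_sum, smul_kronecker, kronecker_smul, smul_smul,
    ← mul_kronecker_mul, trace_kronecker, div_mul_div_comm]
  refine Finset.sum_congr rfl fun q _ => ?_
  rw [mul_comm (X * D q.1).trace, mul_comm (D q.1).trace]

end FrameOperator

namespace IsInvSqrtOfFrameOp

variable {ι m : Type*} [Fintype ι] [Fintype m] [DecidableEq m] {L : ι → Matrix m m ℂ}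
  {T : Matrix m m ℂ → Matrix m m ℂ}

/-- Every Hermitian `X = S_L (T (T X))` is a real combination of the `L i`. -/
lemma span_eq_top (hL : ∀ i, (L i).IsHermitian) (hT : IsInvSqrtOfFrameOp L T) :
    Submodule.span ℝ (Set.range fun i => (⟨L i, hL i⟩ : HermMat m)) = ⊤ := by
  refine Submodule.eq_top_iff'.2 fun X => ?_
  have hTTX := hT.1.2.1 _ (hT.1.2.1 X X.2)
  have hX : X = ∑ j, ((T (T X) * L j).trace.re / (L j).trace.re) • ⟨L j, hL j⟩ := by
    apply Subtype.ext
    push_cast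
    rw [← rsFrameOp_eq_sum_real_smul hL hTTX, hT.2 X X.2]
  rw [hX]
  exact Submodule.sum_mem _ fun j _ => Submodule.smul_mem _ _ (Submodule.subset_span ⟨j, rfl⟩)

noncomputable def hermBasis (hL : ∀ i, (L i).IsHermitian) (hli : LinearIndependent ℝ L)
    (hT : IsInvSqrtOfFrameOp L T) : Module.Basis ι ℝ (HermMat m) :=
  Module.Basis.mk (v := fun i => ⟨L i, hL i⟩) (.of_comp (HermMat m).subtype hli)
    (hT.span_eq_top hL).ge

@[simp]
lemma coe_hermBasis (hL : ∀ i, (L i).IsHermitian) (hli : LinearIndependent ℝ L)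
    (hT : IsInvSqrtOfFrameOp L T) (i : ι) : (hT.hermBasis hL hli i : Matrix m m ℂ) = L i := by
  simp [hermBasis]

theorem toHerm_eq (hL : ∀ i, (L i).IsHermitian) (hT : IsInvSqrtOfFrameOp L T)
    {g : HermMat m →ₗ[ℝ] HermMat m} (hg : g.IsPositive) (hSg : rsFrameOpHerm hL * (g * g) = 1) :
    hT.1.toHerm = g := by
  have hSf : rsFrameOpHerm hL * (hT.1.toHerm * hT.1.toHerm) = 1 :=
    LinearMap.ext fun X => Subtype.ext (hT.2 X X.2)
  refine hT.1.isPositive_toHerm.eq_of_mul_self_eq hg ?_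
  exact (left_inv_eq_right_inv (mul_eq_one_comm.mp hSg) hSf).symm

end IsInvSqrtOfFrameOp

lemma linearIndependent_kronecker {ι κ m n : Type*} [Fintype ι] [Fintype κ] [Fintype m]
    [Fintype n] {D : ι → Matrix m m ℂ} {E : κ → Matrix n n ℂ}
    (hD : ∀ i, (D i).IsHermitian) (hE : ∀ j, (E j).IsHermitian)
    (hliD : LinearIndependent ℝ D) (hliE : LinearIndependent ℝ E) :
    LinearIndependent ℝ fun q : ι × κ => D q.1 ⊗ₖ E q.2 := by
  let D' i : HermMat m := ⟨D i, hD i⟩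
  let E' j : HermMat n := ⟨E j, hE j⟩
  have hliD' : LinearIndependent ℝ D' := .of_comp (HermMat m).subtype hliD
  have hliE' : LinearIndependent ℝ E' := .of_comp (HermMat n).subtype hliE
  have hgram : Matrix.gram ℝ (fun q : ι × κ => HermMat.kron (D' q.1) (E' q.2))
      = Matrix.gram ℝ D' ⊗ₖ Matrix.gram ℝ E' := by
    ext q q'
    exact HermMat.inner_kron _ _ _ _
  have hposDef : (Matrix.gram ℝ (fun q : ι × κ => HermMat.kron (D' q.1) (E' q.2))).PosDef := by
    rw [hgram]
    exact (posDef_gram_of_linearIndependent hliD').kronecker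
      (posDef_gram_of_linearIndependent hliE')
  have hcoe : (HermMat (m × n)).subtype ∘ (fun q : ι × κ => HermMat.kron (D' q.1) (E' q.2))
      = fun q => D q.1 ⊗ₖ E q.2 := by
    ext1 q
    exact HermMat.coe_kron _ _
  rw [← hcoe]
  exact (linearIndependent_of_posDef_gram hposDef).map' _ (Submodule.ker_subtype _)

section KroneckerMap

variable {ι κ m n : Type*} [Fintype m] [Fintype n]
  {bD : Module.Basis ι ℝ (HermMat m)} {bE : Module.Basis κ ℝ (HermMat n)}
  {bM : Module.Basis (ι × κ) ℝ (HermMat (m × n))}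
  {t₁ : HermMat m →ₗ[ℝ] HermMat m} {t₂ : HermMat n →ₗ[ℝ] HermMat n}

variable (bD bE bM t₁ t₂) in
/-- `t₁ ⊗ t₂`, defined through a basis `bM` meant to consist of the `bD i ⊗ bE j`. -/
noncomputable def kronMap : HermMat (m × n) →ₗ[ℝ] HermMat (m × n) :=
  bM.constr ℝ fun q => HermMat.kron (t₁ (bD q.1)) (t₂ (bE q.2))

lemma kronMap_kron (hbM : ∀ q, bM q = HermMat.kron (bD q.1) (bE q.2))
    (X : HermMat m) (Y : HermMat n) :
    kronMap bD bE bM t₁ t₂ (HermMat.kron X Y) = HermMat.kron (t₁ X) (t₂ Y) := by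
  have : HermMat.kron.compr₂ (kronMap bD bE bM t₁ t₂) = HermMat.kron.compl₁₂ t₁ t₂ :=
    LinearMap.ext_basis bD bE fun i j => by
      rw [LinearMap.compr₂_apply, ← hbM (i, j), kronMap, Module.Basis.constr_basis,
        LinearMap.compl₁₂_apply]
  exact LinearMap.congr_fun₂ this X Y

lemma isPositive_kronMap [Fintype ι] [Fintype κ]
    (hbM : ∀ q, bM q = HermMat.kron (bD q.1) (bE q.2)) (h₁ : t₁.IsPositive)
    (h₂ : t₂.IsPositive) : (kronMap bD bE bM t₁ t₂).IsPositive := by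
  rw [LinearMap.isPositive_iff_posSemidef_inner_basis bM]
  rw [LinearMap.isPositive_iff_posSemidef_inner_basis bD] at h₁
  rw [LinearMap.isPositive_iff_posSemidef_inner_basis bE] at h₂
  have hK : (Matrix.of fun q q' => ⟪bM q, kronMap bD bE bM t₁ t₂ (bM q')⟫_ℝ) =
      (Matrix.of fun i i' => ⟪bD i, t₁ (bD i')⟫_ℝ) ⊗ₖ
        (Matrix.of fun j j' => ⟪bE j, t₂ (bE j')⟫_ℝ) := by
    ext q q'
    rw [Matrix.of_apply, hbM, hbM, kronMap_kron hbM, HermMat.inner_kron]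
    rfl
  rw [hK]
  exact h₁.kronecker h₂

end KroneckerMap

theorem IsInvSqrtOfFrameOp.apply_kronecker {ι κ m n : Type*} [Fintype ι] [Fintype κ]
    [Fintype m] [DecidableEq m] [Fintype n] [DecidableEq n]
    {D : ι → Matrix m m ℂ} {E : κ → Matrix n n ℂ}
    (hD : ∀ i, (D i).IsHermitian) (hE : ∀ j, (E j).IsHermitian)
    (hliD : LinearIndependent ℝ D) (hliE : LinearIndependent ℝ E)
    {T₁ : Matrix m m ℂ → Matrix m m ℂ} {T₂ : Matrix n n ℂ → Matrix n n ℂ}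
    {T : Matrix (m × n) (m × n) ℂ → Matrix (m × n) (m × n) ℂ}
    (hT : IsInvSqrtOfFrameOp (fun q : ι × κ => D q.1 ⊗ₖ E q.2) T)
    (hT₁ : IsInvSqrtOfFrameOp D T₁) (hT₂ : IsInvSqrtOfFrameOp E T₂) (q : ι × κ) :
    T (D q.1 ⊗ₖ E q.2) = T₁ (D q.1) ⊗ₖ T₂ (E q.2) := by
  have hM (q : ι × κ) := (hD q.1).kronecker (hE q.2)
  let bD := hT₁.hermBasis hD hliD
  let bE := hT₂.hermBasis hE hliE
  let bM := hT.hermBasis hM (linearIndependent_kronecker hD hE hliD hliE)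
  have hbM (q : ι × κ) : bM q = HermMat.kron (bD q.1) (bE q.2) :=
    Subtype.ext (by simp [bM, bD, bE])
  let g := kronMap bD bE bM hT₁.1.toHerm hT₂.1.toHerm
  have hSg : rsFrameOpHerm hM * (g * g) = 1 := bM.ext fun q => Subtype.ext <| by
    simp only [Module.End.mul_apply, g, hbM, kronMap_kron hbM]
    simp only [rsFrameOpHerm, IsPosSelfAdjMap.toHerm, IsLinearMap.coe_restrictHerm,
      HermMat.coe_kron, rsFrameOp_kronecker, bD, bE, coe_hermBasis, hT₁.2 _ (hD q.1),
      hT₂.2 _ (hE q.2), Module.End.one_apply]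
  have hfg := hT.toHerm_eq hM (isPositive_kronMap hbM hT₁.1.isPositive_toHerm
    hT₂.1.isPositive_toHerm) hSg
  have := congrArg Subtype.val (LinearMap.congr_fun hfg (bM q))
  simpa [g, hbM, kronMap_kron hbM, IsPosSelfAdjMap.toHerm, bD, bE, bM] using this

theorem principal_wigner_tensor_product {d₁ d₂ : ℕ}
    (D : Fin (d₁ ^ 2) → Matrix (Fin d₁) (Fin d₁) ℂ)
    (E : Fin (d₂ ^ 2) → Matrix (Fin d₂) (Fin d₂) ℂ)
    (hD : IsMeasureBasis D) (hE : IsMeasureBasis E)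
    (M : Fin (d₁ ^ 2) × Fin (d₂ ^ 2) → Matrix (Fin d₁ × Fin d₂) (Fin d₁ × Fin d₂) ℂ)
    (hM : ∀ p, M p = D p.1 ⊗ₖ E p.2)
    (G₁ : Matrix (Fin (d₁ ^ 2)) (Fin (d₁ ^ 2)) ℝ)
    (hG₁ : ∀ i k, G₁ i k = ((D i * D k).trace).re)
    (G₂ : Matrix (Fin (d₂ ^ 2)) (Fin (d₂ ^ 2)) ℝ)
    (hG₂ : ∀ j l, G₂ j l = ((E j * E l).trace).re)
    (Gp : Matrix (Fin (d₁ ^ 2) × Fin (d₂ ^ 2)) (Fin (d₁ ^ 2) × Fin (d₂ ^ 2)) ℝ)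
    (hGp : ∀ p q, Gp p q = ((M p * M q).trace).re)
    (A₁ : Matrix (Fin (d₁ ^ 2)) (Fin (d₁ ^ 2)) ℝ)
    (hA₁ : A₁ = Matrix.diagonal fun i => ((D i).trace).re)
    (A₂ : Matrix (Fin (d₂ ^ 2)) (Fin (d₂ ^ 2)) ℝ)
    (hA₂ : A₂ = Matrix.diagonal fun j => ((E j).trace).re)
    (Ap : Matrix (Fin (d₁ ^ 2) × Fin (d₂ ^ 2)) (Fin (d₁ ^ 2) × Fin (d₂ ^ 2)) ℝ)
    (hAp : Ap = Matrix.diagonal fun p => ((M p).trace).re)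
    (T₁ : Matrix (Fin d₁) (Fin d₁) ℂ → Matrix (Fin d₁) (Fin d₁) ℂ)
    (hT₁ : IsInvSqrtOfFrameOp D T₁)
    (T₂ : Matrix (Fin d₂) (Fin d₂) ℂ → Matrix (Fin d₂) (Fin d₂) ℂ)
    (hT₂ : IsInvSqrtOfFrameOp E T₂)
    (Tp : Matrix (Fin d₁ × Fin d₂) (Fin d₁ × Fin d₂) ℂ →
          Matrix (Fin d₁ × Fin d₂) (Fin d₁ × Fin d₂) ℂ)
    (hTp : IsInvSqrtOfFrameOp M Tp) :
    (∀ p, (M p).IsHermitian) ∧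
    LinearIndependent ℝ M ∧
    (∑ p, M p) = 1 ∧
    (∀ p, (M p).trace = (D p.1).trace * (E p.2).trace) ∧
    Gp = G₁ ⊗ₖ G₂ ∧
    Ap * Gp⁻¹ = (A₁ * G₁⁻¹) ⊗ₖ (A₂ * G₂⁻¹) ∧
    (∀ p, Tp (M p) = (T₁ (D p.1)) ⊗ₖ (T₂ (E p.2))) ∧
    ((∀ i, (D i).PosSemidef) → (∀ j, (E j).PosSemidef) → ∀ p, (M p).PosSemidef) := by
  obtain rfl : M = fun p => D p.1 ⊗ₖ E p.2 := funext hM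
  obtain ⟨hDh, hDli, hDsum, -⟩ := hD
  obtain ⟨hEh, hEli, hEsum, -⟩ := hE
  have hGp' : Gp = G₁ ⊗ₖ G₂ := by
    ext ⟨i, j⟩ ⟨k, l⟩
    rw [hGp, kronecker_apply, hG₁, hG₂, (hDh i).re_trace_kronecker_mul_kronecker (hDh k)]
  have hAp' : Ap = A₁ ⊗ₖ A₂ := by
    rw [hAp, hA₁, hA₂, diagonal_kronecker_diagonal]
    exact congrArg diagonal (funext fun p => (hDh p.1).re_trace_kronecker _)
  refine ⟨fun p => (hDh p.1).kronecker (hEh p.2), linearIndependent_kronecker hDh hEh hDli hEli,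
    ?_, fun p => trace_kronecker _ _, hGp', ?_,
    hTp.apply_kronecker hDh hEh hDli hEli hT₁ hT₂, fun hD hE p => (hD p.1).kronecker (hE p.2)⟩
  · rw [← sum_kronecker_sum, hDsum, hEsum, one_kronecker_one]
  · rw [hAp', hGp', inv_kronecker, mul_kronecker_mul]
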